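/- Let n = 1 and consider f(x) = f₀ + b·x^{2d} + c·x^k with f₀, b > 0, d ≥ 1, k odd, 0 < k < 2d, and c ∈ ℝ. Set λ_0 = 1 − k/(2d), λ_1 = k/(2d), and Θ = (f₀/λ_0)^{λ_0}·(b/λ_1)^{λ_1}. Then f(x) ≥ 0 for all x ∈ ℝ if and only if |c| ≤ Θ. -/

import Mathlib

/-! As `k` is odd, `x ↦ -x` flips the sign of `c`, and the substitution `s = |x| ^ (2d)` turns
`f ≥ 0` into `|c| * s ^ λ₁ ≤ f₀ + b * s` for all `s ≥ 0`, with `λ₁ = k / (2d)`. By weighted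
AM-GM applied to `f₀ / λ₀` and `b s / λ₁`, the left side is at most `f₀ + b s` as soon as
`|c| ≤ Θ`, and AM-GM is an equality at `s = λ₁ f₀ / (λ₀ b)`, so `Θ` is the best constant. -/

open Real

/-- The paper's `Θ` for the circuit `{0, 1}` with interior point `l = λ₁`, so that `λ₀ = 1 - l`. -/
noncomputable def circuitNumber (a b l : ℝ) : ℝ :=
  (a / (1 - l)) ^ (1 - l) * (b / l) ^ l

section CircuitNumber

variable {a b l : ℝ}

theorem circuitNumber_mul_rpow_le (ha : 0 ≤ a) (hb : 0 ≤ b) (hl0 : 0 < l) (hl1 : l < 1)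
    {s : ℝ} (hs : 0 ≤ s) : circuitNumber a b l * s ^ l ≤ a + b * s := by
  have hl1' : 0 < 1 - l := sub_pos.2 hl1
  calc circuitNumber a b l * s ^ l = (a / (1 - l)) ^ (1 - l) * (b * s / l) ^ l := by
        rw [circuitNumber, mul_assoc, ← mul_rpow (by positivity) hs, div_mul_eq_mul_div]
    _ ≤ (1 - l) * (a / (1 - l)) + l * (b * s / l) :=
        geom_mean_le_arith_mean2_weighted hl1'.le hl0.le (by positivity) (by positivity)
          (sub_add_cancel 1 l)
    _ = a + b * s := by field_simp

theorem circuitNumber_mul_rpow_eq (ha : 0 < a) (hb : 0 < b) (hl0 : 0 < l) (hl1 : l < 1) :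
    circuitNumber a b l * (l * a / ((1 - l) * b)) ^ l = a + b * (l * a / ((1 - l) * b)) := by
  have hl1' : 0 < 1 - l := sub_pos.2 hl1
  have hA : 0 < a / (1 - l) := div_pos ha hl1'
  have hsplit : (b / l) ^ l * (l * a / ((1 - l) * b)) ^ l = (a / (1 - l)) ^ l := by
    rw [← mul_rpow (by positivity) (by positivity)]
    congr 1
    field_simp
  calc circuitNumber a b l * (l * a / ((1 - l) * b)) ^ l
      = (a / (1 - l)) ^ (1 - l) * (a / (1 - l)) ^ l := by
        rw [circuitNumber, mul_assoc, hsplit]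
    _ = a / (1 - l) := by rw [← rpow_add hA, sub_add_cancel, rpow_one]
    _ = a + b * (l * a / ((1 - l) * b)) := by field_simp; ring

theorem forall_mul_rpow_le_iff_le_circuitNumber (ha : 0 < a) (hb : 0 < b) (hl0 : 0 < l)
    (hl1 : l < 1) (c : ℝ) :
    (∀ s, 0 ≤ s → c * s ^ l ≤ a + b * s) ↔ c ≤ circuitNumber a b l := by
  constructor
  · intro h
    have hs : 0 < l * a / ((1 - l) * b) := by
      have := sub_pos.2 hl1
      positivity
    refine le_of_mul_le_mul_right ?_ (rpow_pos_of_pos hs l)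
    rw [circuitNumber_mul_rpow_eq ha hb hl0 hl1]
    exact h _ hs.le
  · intro hc s hs
    exact (mul_le_mul_of_nonneg_right hc (rpow_nonneg hs l)).trans
      (circuitNumber_mul_rpow_le ha.le hb.le hl0 hl1 hs)

end CircuitNumber

theorem forall_nonneg_iff_forall_abs_mul_pow_le {a b c : ℝ} {n k : ℕ} (hn : Even n)
    (hk : Odd k) :
    (∀ x : ℝ, 0 ≤ a + b * x ^ n + c * x ^ k) ↔ ∀ t, 0 ≤ t → |c| * t ^ k ≤ a + b * t ^ n := by
  constructor
  · intro h t _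
    rcases le_or_gt 0 c with hc | hc
    · have := h (-t)
      rw [hk.neg_pow, hn.neg_pow] at this
      rw [abs_of_nonneg hc]
      linarith
    · have := h t
      rw [abs_of_neg hc]
      linarith
  · intro h x
    have hbound := h |x| (abs_nonneg x)
    have hcx : -(|c| * |x| ^ k) ≤ c * x ^ k := by
      rw [← abs_pow, ← abs_mul]
      exact neg_abs_le _
    rw [hn.pow_abs] at hbound
    linarith

theorem pow_eq_pow_rpow_div {t : ℝ} (ht : 0 ≤ t) {n : ℕ} (hn : n ≠ 0) (k : ℕ) :
    t ^ k = (t ^ n) ^ ((k : ℝ) / n) := by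
  rw [← rpow_natCast t n, ← rpow_mul ht, mul_div_cancel₀ _ (Nat.cast_ne_zero.2 hn),
    rpow_natCast]

theorem forall_mul_pow_le_iff_forall_mul_rpow_le {a b c : ℝ} {n : ℕ} (hn : n ≠ 0) (k : ℕ) :
    (∀ t, 0 ≤ t → c * t ^ k ≤ a + b * t ^ n) ↔
      ∀ s, 0 ≤ s → c * s ^ ((k : ℝ) / n) ≤ a + b * s := by
  constructor
  · intro h s hs
    have hroot := rpow_inv_natCast_pow hs hn
    have := h (s ^ (n⁻¹ : ℝ)) (rpow_nonneg hs _)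
    rwa [pow_eq_pow_rpow_div (rpow_nonneg hs _) hn, hroot] at this
  · intro h t ht
    rw [pow_eq_pow_rpow_div ht hn]
    exact h _ (pow_nonneg ht n)

theorem stmt_14_general (f0 b c : ℝ) (d k : ℕ)
    (hf0 : 0 < f0) (hb : 0 < b) (hkodd : Odd k)
    (hk2d : k < 2 * d) :
    (∀ x : ℝ, 0 ≤ f0 + b * x ^ (2 * d) + c * x ^ k) ↔
      |c| ≤ (f0 / (1 - (k : ℝ) / (2 * d))) ^ (1 - (k : ℝ) / (2 * d)) *
        (b / ((k : ℝ) / (2 * d))) ^ ((k : ℝ) / (2 * d)) := by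
  have hn : 2 * d ≠ 0 := by omega
  have hn' : (0 : ℝ) < (2 * d : ℕ) := by exact_mod_cast Nat.pos_of_ne_zero hn
  have hl0 : 0 < (k : ℝ) / (2 * d : ℕ) := div_pos (by exact_mod_cast hkodd.pos) hn'
  have hl1 : (k : ℝ) / (2 * d : ℕ) < 1 := (div_lt_one hn').2 (by exact_mod_cast hk2d)
  rw [forall_nonneg_iff_forall_abs_mul_pow_le (even_two_mul d) hkodd,
    forall_mul_pow_le_iff_forall_mul_rpow_le hn,
    forall_mul_rpow_le_iff_le_circuitNumber hf0 hb hl0 hl1, circuitNumber]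
  push_cast
  rfl

theorem stmt_14 (f0 b c : ℝ) (d k : ℕ)
    (hf0 : 0 < f0) (hb : 0 < b) (hd : 1 ≤ d) (hkodd : Odd k)
    (hk : 0 < k) (hk2d : k < 2 * d) :
    (∀ x : ℝ, 0 ≤ f0 + b * x ^ (2 * d) + c * x ^ k) ↔
      |c| ≤ (f0 / (1 - (k : ℝ) / (2 * d))) ^ (1 - (k : ℝ) / (2 * d)) *
        (b / ((k : ℝ) / (2 * d))) ^ ((k : ℝ) / (2 * d)) :=
  stmt_14_general f0 b c d k hf0 hb hkodd hk2d
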